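/- For three bidders with the reduction's outcome structure, the revenue of any signaling scheme φ decomposes as Rev(φ) = K₁·∑_σ max(φ(σ,x), φ(σ,y)) + K₂·∑_{u∈V∖{x,y}} ∑_σ [min(φ(σ,x),φ(σ,u)) + min(φ(σ,y),φ(σ,u))] + ∑_{(u,v)∈E} ∑_σ max(φ(σ,u), φ(σ,v)). -/
import Mathlib


open Finset

/-- The second-largest value of `f` (counting multiplicity): the supremum of
`min (f i) (f j)` over pairs of distinct indices. -/
noncomputable def secondmax {ι : Type*} [Fintype ι] (f : ι → ℝ) : ℝ :=
  sSup {x | ∃ i j : ι, i ≠ j ∧ x = min (f i) (f j)}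

/-- A signaling scheme: nonnegative entries, and for each good `j` the signal
probabilities sum to one. -/
def IsScheme {S J : Type*} [Fintype S] (φ : S → J → ℝ) : Prop :=
  (∀ σ j, 0 ≤ φ σ j) ∧ ∀ j, ∑ σ, φ σ j = 1

/-- Revenue of a signaling scheme under normalized valuations `Ψ`. -/
noncomputable def Rev {S : Type*} [Fintype S] {n : ℕ} {J : Type*} [Fintype J]
    (Ψ : Fin n → J → ℝ) (φ : S → J → ℝ) : ℝ :=
  ∑ σ, secondmax (fun i => ∑ j, φ σ j * Ψ i j)

/-- Vertices of `V ∖ {x,y}`. -/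
def Others {n : ℕ} (x y : Fin n) : Finset (Fin n) := (Finset.univ.erase x).erase y

/-- The weighted valuation matrices `Φ_ℓ` of the MAX-CUT reduction: outcome type (a)
with weight `K₁`, types (b),(c) per vertex `u ∉ {x,y}` with weight `K₂`, and type (d)
per edge with weight `1`. -/
noncomputable def Phi {n : ℕ} (K₁ K₂ : ℝ) (x y : Fin n) (E : Finset (Fin n × Fin n)) :
    (Unit ⊕ (↥(Others x y) ⊕ (↥(Others x y) ⊕ ↥E))) → Fin 3 → Fin n → ℝ
  | Sum.inl _ => fun i u =>
      if i = 0 then (if u = x then K₁ else 0)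
      else if i = 1 then (if u = y then K₁ else 0)
      else (if u = x ∨ u = y then K₁ else 0)
  | Sum.inr (Sum.inl w) => fun i u =>
      if i = 0 then (if u = x then K₂ else 0)
      else if i = 1 then (if u = (w : Fin n) then K₂ else 0)
      else 0
  | Sum.inr (Sum.inr (Sum.inl w)) => fun i u =>
      if i = 0 then (if u = y then K₂ else 0)
      else if i = 1 then (if u = (w : Fin n) then K₂ else 0)
      else 0
  | Sum.inr (Sum.inr (Sum.inr e)) => fun i u =>
      if i = 0 then (if u = (e : Fin n × Fin n).1 then 1 else 0)
      else if i = 1 then (if u = (e : Fin n × Fin n).2 then 1 else 0)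
      else (if u = (e : Fin n × Fin n).1 ∨ u = (e : Fin n × Fin n).2 then 1 else 0)

lemma secondmax_fin3 (f : Fin 3 → ℝ) :
    secondmax f = max (min (f 0) (f 1)) (max (min (f 0) (f 2)) (min (f 1) (f 2))) := by
  have hset : {x | ∃ i j : Fin 3, i ≠ j ∧ x = min (f i) (f j)}
      = {min (f 0) (f 1), min (f 0) (f 2), min (f 1) (f 2)} := by
    ext z
    constructor
    · rintro ⟨i, j, hij, rfl⟩
      fin_cases i <;> fin_cases j <;> simp_all [Set.mem_insert_iff] <;> (first | exact Or.inl (inf_comm _ _) | exact Or.inr (Or.inl (inf_comm _ _)) | exact Or.inr (Or.inr (inf_comm _ _)))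
    · intro hz
      rcases hz with h | h | h
      · exact ⟨0, 1, by decide, h⟩
      · exact ⟨0, 2, by decide, h⟩
      · exact ⟨1, 2, by decide, h⟩
  rw [secondmax, hset]
  rw [csSup_insert (Set.Finite.bddAbove (by simp)) (by simp), csSup_pair]

lemma secondmax_eq_of (f : Fin 3 → ℝ) (A B C : ℝ) (h0 : f 0 = A) (h1 : f 1 = B)
    (h2 : f 2 = C) : secondmax f = max (min A B) (max (min A C) (min B C)) := by
  rw [secondmax_fin3, h0, h1, h2]

lemma max_helper (A B : ℝ) (hA : 0 ≤ A) (hB : 0 ≤ B) :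
    max (min A B) (max (min A (A + B)) (min B (A + B))) = max A B := by
  rw [min_eq_left (le_add_of_nonneg_right hB), min_eq_left (le_add_of_nonneg_left hA),
    max_eq_right min_le_max]

lemma min_helper (A B : ℝ) (hA : 0 ≤ A) (hB : 0 ≤ B) :
    max (min A B) (max (min A 0) (min B 0)) = min A B := by
  rw [min_eq_right hA, min_eq_right hB, max_self, max_eq_left (le_min hA hB)]

/-- Revenue decomposition for any signaling scheme on the MAX-CUT reduction instance. -/
theorem stmt15 {n : ℕ} (K₁ K₂ : ℝ) (hK₁ : 0 ≤ K₁) (hK₂ : 0 ≤ K₂)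
    (x y : Fin n) (hxy : x ≠ y)
    (E : Finset (Fin n × Fin n)) (hE : ∀ e ∈ E, e.1 ≠ e.2)
    {S : Type*} [Fintype S] (φ : S → Fin n → ℝ) (hφ : IsScheme φ) :
    ∑ ℓ, ∑ σ : S, secondmax (fun i : Fin 3 => ∑ u, Phi K₁ K₂ x y E ℓ i u * φ σ u)
      = K₁ * ∑ σ : S, max (φ σ x) (φ σ y)
        + K₂ * ∑ w : ↥(Others x y), ∑ σ : S,
            (min (φ σ x) (φ σ (w : Fin n)) + min (φ σ y) (φ σ (w : Fin n)))
        + ∑ e ∈ E, ∑ σ : S, max (φ σ e.1) (φ σ e.2) := by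
  obtain ⟨hpos, hsum⟩ := hφ
  rw [Fintype.sum_sum_type, Fintype.sum_sum_type, Fintype.sum_sum_type]
  -- type (a)
  have ha : ∀ σ : S,
      secondmax (fun i : Fin 3 => ∑ u, Phi K₁ K₂ x y E (Sum.inl ()) i u * φ σ u)
        = K₁ * max (φ σ x) (φ σ y) := by
    intro σ
    have h0 : (fun i : Fin 3 => ∑ u, Phi K₁ K₂ x y E (Sum.inl ()) i u * φ σ u) 0
        = K₁ * φ σ x := by
      simp [Phi, ite_mul, Finset.sum_ite_eq']
    have h1 : (fun i : Fin 3 => ∑ u, Phi K₁ K₂ x y E (Sum.inl ()) i u * φ σ u) 1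
        = K₁ * φ σ y := by
      simp [Phi, ite_mul, Finset.sum_ite_eq']
    have h2 : (fun i : Fin 3 => ∑ u, Phi K₁ K₂ x y E (Sum.inl ()) i u * φ σ u) 2
        = K₁ * φ σ x + K₁ * φ σ y := by
      have key : ∀ u : Fin n, (if u = x ∨ u = y then K₁ * φ σ u else 0)
          = (if u = x then K₁ * φ σ u else 0) + (if u = y then K₁ * φ σ u else 0) := by
        intro u
        by_cases h1 : u = x
        · subst h1; simp [hxy]
        · by_cases h2 : u = y <;> simp [h1, h2, hxy.symm]
      simp only [Phi]
      norm_num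
      rw [Finset.sum_congr rfl (fun u _ => key u), Finset.sum_add_distrib]
      simp [Finset.sum_ite_eq']
    rw [secondmax_eq_of _ _ _ _ h0 h1 h2,
      max_helper _ _ (mul_nonneg hK₁ (hpos σ x)) (mul_nonneg hK₁ (hpos σ y)),
      mul_max_of_nonneg _ _ hK₁]
  -- types (b), (c)
  have hb : ∀ (w : ↥(Others x y)) (σ : S),
      secondmax (fun i : Fin 3 => ∑ u, Phi K₁ K₂ x y E (Sum.inr (Sum.inl w)) i u * φ σ u)
        = K₂ * min (φ σ x) (φ σ (w : Fin n)) := by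
    intro w σ
    have h0 : (fun i : Fin 3 => ∑ u, Phi K₁ K₂ x y E (Sum.inr (Sum.inl w)) i u * φ σ u) 0
        = K₂ * φ σ x := by simp [Phi, ite_mul, Finset.sum_ite_eq']
    have h1 : (fun i : Fin 3 => ∑ u, Phi K₁ K₂ x y E (Sum.inr (Sum.inl w)) i u * φ σ u) 1
        = K₂ * φ σ (w : Fin n) := by simp [Phi, ite_mul, Finset.sum_ite_eq']
    have h2 : (fun i : Fin 3 => ∑ u, Phi K₁ K₂ x y E (Sum.inr (Sum.inl w)) i u * φ σ u) 2
        = 0 := by simp [Phi]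
    rw [secondmax_eq_of _ _ _ _ h0 h1 h2,
      min_helper _ _ (mul_nonneg hK₂ (hpos σ x)) (mul_nonneg hK₂ (hpos σ _)),
      mul_min_of_nonneg _ _ hK₂]
  have hc : ∀ (w : ↥(Others x y)) (σ : S),
      secondmax (fun i : Fin 3 =>
          ∑ u, Phi K₁ K₂ x y E (Sum.inr (Sum.inr (Sum.inl w))) i u * φ σ u)
        = K₂ * min (φ σ y) (φ σ (w : Fin n)) := by
    intro w σ
    have h0 : (fun i : Fin 3 =>
        ∑ u, Phi K₁ K₂ x y E (Sum.inr (Sum.inr (Sum.inl w))) i u * φ σ u) 0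
        = K₂ * φ σ y := by simp [Phi, ite_mul, Finset.sum_ite_eq']
    have h1 : (fun i : Fin 3 =>
        ∑ u, Phi K₁ K₂ x y E (Sum.inr (Sum.inr (Sum.inl w))) i u * φ σ u) 1
        = K₂ * φ σ (w : Fin n) := by simp [Phi, ite_mul, Finset.sum_ite_eq']
    have h2 : (fun i : Fin 3 =>
        ∑ u, Phi K₁ K₂ x y E (Sum.inr (Sum.inr (Sum.inl w))) i u * φ σ u) 2
        = 0 := by simp [Phi]
    rw [secondmax_eq_of _ _ _ _ h0 h1 h2,
      min_helper _ _ (mul_nonneg hK₂ (hpos σ y)) (mul_nonneg hK₂ (hpos σ _)),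
      mul_min_of_nonneg _ _ hK₂]
  -- type (d)
  have hd : ∀ (e : ↥E) (σ : S),
      secondmax (fun i : Fin 3 =>
          ∑ u, Phi K₁ K₂ x y E (Sum.inr (Sum.inr (Sum.inr e))) i u * φ σ u)
        = max (φ σ (e : Fin n × Fin n).1) (φ σ (e : Fin n × Fin n).2) := by
    intro e σ
    have hne := hE (e : Fin n × Fin n) e.2
    have h0 : (fun i : Fin 3 =>
        ∑ u, Phi K₁ K₂ x y E (Sum.inr (Sum.inr (Sum.inr e))) i u * φ σ u) 0
        = φ σ (e : Fin n × Fin n).1 := by simp [Phi, ite_mul, Finset.sum_ite_eq']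
    have h1 : (fun i : Fin 3 =>
        ∑ u, Phi K₁ K₂ x y E (Sum.inr (Sum.inr (Sum.inr e))) i u * φ σ u) 1
        = φ σ (e : Fin n × Fin n).2 := by simp [Phi, ite_mul, Finset.sum_ite_eq']
    have h2 : (fun i : Fin 3 =>
        ∑ u, Phi K₁ K₂ x y E (Sum.inr (Sum.inr (Sum.inr e))) i u * φ σ u) 2
        = φ σ (e : Fin n × Fin n).1 + φ σ (e : Fin n × Fin n).2 := by
      have key : ∀ u : Fin n,
          (if u = (e : Fin n × Fin n).1 ∨ u = (e : Fin n × Fin n).2 then φ σ u else 0)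
          = (if u = (e : Fin n × Fin n).1 then φ σ u else 0)
            + (if u = (e : Fin n × Fin n).2 then φ σ u else 0) := by
        intro u
        by_cases h1 : u = (e : Fin n × Fin n).1
        · subst h1; simp [hne]
        · by_cases h2 : u = (e : Fin n × Fin n).2 <;> simp [h1, h2, hne.symm]
      simp only [Phi]
      norm_num
      rw [Finset.sum_congr rfl (fun u _ => key u), Finset.sum_add_distrib]
      simp [Finset.sum_ite_eq']
    rw [secondmax_eq_of _ _ _ _ h0 h1 h2,
      max_helper _ _ (hpos σ _) (hpos σ _)]
  simp only [ha, hb, hc, hd]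
  rw [Finset.sum_const, Finset.card_univ]
  simp only [Fintype.card_unit, one_smul]
  rw [← Finset.sum_coe_sort E]
  have e1 : K₁ * ∑ σ : S, max (φ σ x) (φ σ y) = ∑ σ : S, K₁ * max (φ σ x) (φ σ y) :=
    Finset.mul_sum _ _ _
  have e2 : K₂ * ∑ w : ↥(Others x y), ∑ σ : S,
        (min (φ σ x) (φ σ (w : Fin n)) + min (φ σ y) (φ σ (w : Fin n)))
      = (∑ w : ↥(Others x y), ∑ σ : S, K₂ * min (φ σ x) (φ σ (w : Fin n)))
        + ∑ w : ↥(Others x y), ∑ σ : S, K₂ * min (φ σ y) (φ σ (w : Fin n)) := by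
    rw [Finset.mul_sum, ← Finset.sum_add_distrib]
    refine Finset.sum_congr rfl fun w _ => ?_
    rw [Finset.mul_sum, ← Finset.sum_add_distrib]
    refine Finset.sum_congr rfl fun σ _ => ?_
    ring
  rw [e1, e2]
  ring
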